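/- Define, for complex λ with Re(λ) ≥ 0, g(λ) = (S_v^0/μ_v)·∫_0^∞ β_h(a)·∫_0^a β_v(s)·s_h^0(s)·exp(-∫_s^a (μ_h(z)+δ(z)+r_1(z)+λ)dz) ds da. Then |g(λ)| ≤ R_0² for every complex λ with Re(λ) ≥ 0. In particular, if R_0 < 1, then g(λ) ≠ 1 for every complex λ with Re(λ) ≥ 0. -/

import Mathlib

/-!
For `Re λ ≥ 0` the complex survival factor `exp (-∫ₛᵃ (c + λ))` has modulus at most the real
survival probability `exp (-∫ₛᵃ c)`, so by the triangle inequality `‖g λ‖` is bounded by the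
Lebesgue integral of the real kernel over the triangle `0 < s ≤ a`. Tonelli and the substitution
`a = ξ + t` turn that integral into the double integral defining `R₀²`. The mortality bound
`μ₀ > 0` makes the kernel decay exponentially in both variables, so the double integral is finite
and the Lebesgue and Bochner integrals agree.
-/

open MeasureTheory Real Set
open scoped ENNReal

lemma intervalIntegrable_of_le_of_le {f : ℝ → ℝ} {m M : ℝ} (hf : Measurable f)
    (hm : ∀ x, m ≤ f x) (hM : ∀ x, f x ≤ M) (s a : ℝ) : IntervalIntegrable f volume s a :=
  (intervalIntegrable_const (c := max |m| |M|)).mono_fun hf.aestronglyMeasurable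
    (ae_of_all _ fun x => (abs_le_max_abs_abs (hm x) (hM x)).trans (le_abs_self _))

lemma lintegral_Ioi_zero_comp_const_add (g : ℝ → ℝ≥0∞) (ξ : ℝ) :
    ∫⁻ t in Ioi 0, g (ξ + t) = ∫⁻ a in Ioi ξ, g a := by
  simpa [preimage_const_add_Ioi] using
    (measurePreserving_add_left volume ξ).setLIntegral_comp_preimage_emb
      (measurableEmbedding_addLeft ξ) g (Ioi ξ)

lemma lintegral_Ioi_lintegral_Ioc_eq_lintegral_Ioi_lintegral_Ioi_add {f : ℝ → ℝ → ℝ≥0∞}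
    (hf : Measurable (Function.uncurry f)) :
    ∫⁻ a in Ioi 0, ∫⁻ s in Ioc 0 a, f s a = ∫⁻ t in Ioi 0, ∫⁻ ξ in Ioi 0, f ξ (ξ + t) := by
  let φ : ℝ → ℝ → ℝ≥0∞ := fun s a => if s ≤ a then f s a else 0
  have hφ : Measurable (Function.uncurry φ) :=
    Measurable.ite (measurableSet_le measurable_fst measurable_snd) hf measurable_const
  have inner_a (a : ℝ) : ∫⁻ s in Ioc 0 a, f s a = ∫⁻ s in Ioi 0, φ s a := by
    rw [← Ioi_inter_Iic, inter_comm, ← setLIntegral_indicator measurableSet_Iic]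
    rfl
  have inner_s (s : ℝ) (hs : 0 < s) : ∫⁻ t in Ioi 0, f s (s + t) = ∫⁻ a in Ioi 0, φ s a := by
    rw [lintegral_Ioi_zero_comp_const_add (f s), Measure.restrict_congr_set Ioi_ae_eq_Ici,
      ← inter_eq_left.2 (Ici_subset_Ioi.2 hs), ← setLIntegral_indicator measurableSet_Ici]
    rfl
  calc ∫⁻ a in Ioi 0, ∫⁻ s in Ioc 0 a, f s a = ∫⁻ a in Ioi 0, ∫⁻ s in Ioi 0, φ s a := by
        simp_rw [inner_a]
    _ = ∫⁻ s in Ioi 0, ∫⁻ a in Ioi 0, φ s a :=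
        lintegral_lintegral_swap (hφ.comp measurable_swap).aemeasurable
    _ = ∫⁻ s in Ioi 0, ∫⁻ t in Ioi 0, f s (s + t) :=
        (setLIntegral_congr_fun measurableSet_Ioi inner_s).symm
    _ = ∫⁻ t in Ioi 0, ∫⁻ ξ in Ioi 0, f ξ (ξ + t) :=
        lintegral_lintegral_swap
          (hf.comp (measurable_fst.prodMk (measurable_fst.add measurable_snd))).aemeasurable

lemma integral_integral_eq_toReal_lintegral_lintegral {α β : Type*} [MeasurableSpace α]
    [MeasurableSpace β] {μ : Measure α} {ν : Measure β} [SFinite ν] {F : α → β → ℝ}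
    (hF : Measurable (Function.uncurry F)) (hF0 : ∀ x y, 0 ≤ F x y)
    (hfin : ∫⁻ x, ∫⁻ y, ENNReal.ofReal (F x y) ∂ν ∂μ ≠ ∞) :
    ∫ x, ∫ y, F x y ∂ν ∂μ = (∫⁻ x, ∫⁻ y, ENNReal.ofReal (F x y) ∂ν ∂μ).toReal := by
  have hinner (x : α) : ∫ y, F x y ∂ν = (∫⁻ y, ENNReal.ofReal (F x y) ∂ν).toReal :=
    integral_eq_lintegral_of_nonneg_ae (ae_of_all _ (hF0 x))
      (hF.comp measurable_prodMk_left).aestronglyMeasurable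
  have hmeas : Measurable fun x => ∫⁻ y, ENNReal.ofReal (F x y) ∂ν :=
    hF.ennreal_ofReal.lintegral_prod_right'
  simp_rw [hinner]
  rw [integral_eq_lintegral_of_nonneg_ae (ae_of_all _ fun x => ENNReal.toReal_nonneg)
    hmeas.ennreal_toReal.aestronglyMeasurable]
  congr 1
  refine lintegral_congr_ae ?_
  filter_upwards [ae_lt_top hmeas hfin] with x hx
  exact ENNReal.ofReal_toReal hx.ne

lemma norm_integral_le_toReal_lintegral_of_enorm_le {α E : Type*} [MeasurableSpace α]
    {μ : Measure α} [NormedAddCommGroup E] [NormedSpace ℝ E] {f : α → E} {F : α → ℝ≥0∞}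
    (hF : ∫⁻ x, F x ∂μ ≠ ∞) (h : ∀ᵐ x ∂μ, ‖f x‖ₑ ≤ F x) :
    ‖∫ x, f x ∂μ‖ ≤ (∫⁻ x, F x ∂μ).toReal := by
  rw [← toReal_enorm]
  exact ENNReal.toReal_mono hF ((enorm_integral_le_lintegral_enorm f).trans (lintegral_mono_ae h))

lemma lintegral_Ioi_lintegral_Ioi_ne_top_of_le_exp {F : ℝ → ℝ → ℝ} {C m : ℝ} (hm : 0 < m)
    (hF : ∀ ξ t, 0 < ξ → 0 < t → F ξ t ≤ C * exp (-(m * t)) * exp (-(m * ξ))) :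
    ∫⁻ t in Ioi 0, ∫⁻ ξ in Ioi 0, ENNReal.ofReal (F ξ t) ≠ ∞ := by
  set q := ∫⁻ x in Ioi 0, ENNReal.ofReal (exp (-(m * x)))
  have hq : q ≠ ∞ := by
    simpa only [neg_mul] using (exp_neg_integrableOn_Ioi 0 hm).lintegral_lt_top.ne
  refine ne_top_of_le_ne_top (b := ENNReal.ofReal C * q * q) (by finiteness) ?_
  calc ∫⁻ t in Ioi 0, ∫⁻ ξ in Ioi 0, ENNReal.ofReal (F ξ t)
      ≤ ∫⁻ t in Ioi 0, ∫⁻ ξ in Ioi 0,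
          ENNReal.ofReal C * ENNReal.ofReal (exp (-(m * t))) * ENNReal.ofReal (exp (-(m * ξ))) := by
        refine setLIntegral_mono' measurableSet_Ioi fun t ht => ?_
        refine setLIntegral_mono' measurableSet_Ioi fun ξ hξ => ?_
        rw [← ENNReal.ofReal_mul', ← ENNReal.ofReal_mul']
        exacts [ENNReal.ofReal_le_ofReal (hF ξ t hξ ht), (exp_pos _).le, (exp_pos _).le]
    _ = ENNReal.ofReal C * q * q := by
        have hexp : Measurable fun x => ENNReal.ofReal (exp (-(m * x))) := by fun_prop
        simp only [lintegral_const_mul _ hexp]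
        rw [lintegral_mul_const _ (hexp.const_mul _), lintegral_const_mul _ hexp]

noncomputable def survival (c : ℝ → ℝ) (s a : ℝ) : ℝ := exp (-∫ z in s..a, c z)

namespace survival

variable {c : ℝ → ℝ}

lemma pos (s a : ℝ) : 0 < survival c s a := exp_pos _

lemma continuous (hc : ∀ s a, IntervalIntegrable c volume s a) :
    Continuous fun p : ℝ × ℝ => survival c p.1 p.2 := by
  have hF := intervalIntegral.continuous_primitive hc 0
  refine ((hF.comp continuous_snd).sub (hF.comp continuous_fst)).neg.rexp.congr fun p => ?_
  simp only [survival, Pi.neg_apply, Pi.sub_apply, Function.comp_apply,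
    intervalIntegral.integral_interval_sub_left (hc 0 _) (hc 0 _)]

lemma measurable_right (hc : ∀ s a, IntervalIntegrable c volume s a) (s : ℝ) :
    Measurable (survival c s) :=
  ((survival.continuous hc).comp (continuous_const.prodMk continuous_id)).measurable

lemma le_exp_neg_mul {m s a : ℝ} (hc : IntervalIntegrable c volume s a) (hm : ∀ z, m ≤ c z)
    (hsa : s ≤ a) : survival c s a ≤ exp (-(m * (a - s))) := by
  have h := intervalIntegral.integral_mono_on hsa intervalIntegrable_const hc fun z _ => hm z
  rw [intervalIntegral.integral_const, smul_eq_mul, mul_comm] at h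
  exact exp_le_exp.2 (neg_le_neg h)

lemma norm_cexp_le {s a : ℝ} {lam : ℂ} (hc : IntervalIntegrable c volume s a) (hsa : s ≤ a)
    (hlam : 0 ≤ lam.re) :
    ‖Complex.exp (-∫ z in s..a, ((c z : ℂ) + lam))‖ ≤ survival c s a := by
  have hc' : IntervalIntegrable (fun z => (c z : ℂ)) volume s a := ⟨hc.1.ofReal, hc.2.ofReal⟩
  rw [intervalIntegral.integral_add hc' intervalIntegrable_const, intervalIntegral.integral_ofReal,
    intervalIntegral.integral_const, Complex.norm_exp]
  refine exp_le_exp.2 ?_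
  simp only [Complex.neg_re, Complex.add_re, Complex.ofReal_re, Complex.real_smul, Complex.mul_re,
    Complex.ofReal_im, zero_mul, sub_zero]
  linarith [mul_nonneg (sub_nonneg.2 hsa) hlam]

end survival

section Kernel

variable {b w c : ℝ → ℝ}

lemma enorm_ofReal_mul_integral_cexp_le {r a : ℝ} {lam : ℂ} (hr : 0 ≤ r) (hw0 : ∀ s, 0 ≤ w s)
    (hc : ∀ s a, IntervalIntegrable c volume s a) (ha : 0 ≤ a) (hlam : 0 ≤ lam.re) :
    ‖(r : ℂ) * ∫ s in 0..a, (w s : ℂ) * Complex.exp (-∫ z in s..a, ((c z : ℂ) + lam))‖ₑ ≤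
      ∫⁻ s in Ioc 0 a, ENNReal.ofReal (r * w s * survival c s a) := by
  rw [enorm_mul, intervalIntegral.integral_of_le ha]
  refine (mul_le_mul_right (enorm_integral_le_lintegral_enorm _) _).trans ?_
  rw [← lintegral_const_mul' _ _ enorm_ne_top]
  refine setLIntegral_mono' measurableSet_Ioc fun s hs => ?_
  rw [← enorm_mul, ← ofReal_norm, norm_mul, norm_mul, Complex.norm_of_nonneg hr,
    Complex.norm_of_nonneg (hw0 s), mul_assoc]
  gcongr
  exacts [hw0 s, survival.norm_cexp_le (hc s a) hs.2 hlam]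

theorem norm_integral_Ioi_integral_cexp_le
    (hb : Measurable b) (hb0 : ∀ a, 0 ≤ b a) (hw : Measurable w) (hw0 : ∀ s, 0 ≤ w s)
    (hc : ∀ s a, IntervalIntegrable c volume s a)
    (hfin : ∫⁻ t in Ioi 0, ∫⁻ ξ in Ioi 0,
      ENNReal.ofReal (b (ξ + t) * w ξ * survival c ξ (ξ + t)) ≠ ∞)
    {lam : ℂ} (hlam : 0 ≤ lam.re) :
    ‖∫ a in Ioi 0, (b a : ℂ) *
        ∫ s in 0..a, (w s : ℂ) * Complex.exp (-∫ z in s..a, ((c z : ℂ) + lam))‖ ≤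
      ∫ t in Ioi 0, ∫ ξ in Ioi 0, b (ξ + t) * w ξ * survival c ξ (ξ + t) := by
  let K : ℝ → ℝ → ℝ := fun s a => b a * w s * survival c s a
  have hK : Measurable (Function.uncurry K) :=
    ((hb.comp measurable_snd).mul (hw.comp measurable_fst)).mul (survival.continuous hc).measurable
  have hswap :=
    lintegral_Ioi_lintegral_Ioc_eq_lintegral_Ioi_lintegral_Ioi_add
      (f := fun s a => ENNReal.ofReal (K s a)) hK.ennreal_ofReal
  calc _ ≤ (∫⁻ a in Ioi 0, ∫⁻ s in Ioc 0 a, ENNReal.ofReal (b a * w s * survival c s a)).toReal :=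
        norm_integral_le_toReal_lintegral_of_enorm_le (hswap ▸ hfin) <|
          ae_restrict_of_forall_mem measurableSet_Ioi fun a ha =>
            enorm_ofReal_mul_integral_cexp_le (hb0 a) hw0 hc (le_of_lt ha) hlam
    _ = _ := by
        rw [hswap]
        exact (integral_integral_eq_toReal_lintegral_lintegral (F := fun t ξ => K ξ (ξ + t))
          (hK.comp (measurable_snd.prodMk (measurable_snd.add measurable_fst)))
          (fun t ξ => mul_nonneg (mul_nonneg (hb0 _) (hw0 ξ)) (survival.pos _ _).le) hfin).symm

lemma lintegral_Ioi_lintegral_Ioi_survival_ne_top {B W m : ℝ} (hm : 0 < m)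
    (hb : ∀ a, b a ≤ B) (hb0 : ∀ a, 0 ≤ b a) (hw : ∀ ξ, 0 < ξ → w ξ ≤ W * exp (-(m * ξ)))
    (hw0 : ∀ s, 0 ≤ w s) (hc : ∀ s a, IntervalIntegrable c volume s a) (hcm : ∀ z, m ≤ c z) :
    ∫⁻ t in Ioi 0, ∫⁻ ξ in Ioi 0,
      ENNReal.ofReal (b (ξ + t) * w ξ * survival c ξ (ξ + t)) ≠ ∞ := by
  refine lintegral_Ioi_lintegral_Ioi_ne_top_of_le_exp (C := B * W) hm fun ξ t hξ ht => ?_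
  have hsurv := survival.le_exp_neg_mul (hc ξ (ξ + t)) hcm (by linarith)
  rw [add_sub_cancel_left] at hsurv
  have hB : 0 ≤ B := (hb0 0).trans (hb 0)
  have hW : 0 ≤ W * exp (-(m * ξ)) := (hw0 ξ).trans (hw ξ hξ)
  calc b (ξ + t) * w ξ * survival c ξ (ξ + t)
      ≤ B * (W * exp (-(m * ξ))) * exp (-(m * t)) := by
        gcongr
        exacts [(survival.pos _ _).le, hw0 ξ, hb _, hw ξ hξ]
    _ = B * W * exp (-(m * t)) * exp (-(m * ξ)) := by ring

end Kernel

theorem characteristic_function_complex_bound_general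
    (Λh Λv μv μ0 : ℝ)
    (μh δ r1 βh βv : ℝ → ℝ)
    (hΛh : 0 < Λh) (hΛv : 0 < Λv) (hμv : 0 < μv) (hμ0 : 0 < μ0)
    (hμhm : Measurable μh) (hδm : Measurable δ) (hr1m : Measurable r1)
    (hβhm : Measurable βh) (hβvm : Measurable βv)
    (hμh_lb : ∀ a, μ0 ≤ μh a)
    (hδ0 : ∀ a, 0 ≤ δ a) (hr10 : ∀ a, 0 ≤ r1 a)
    (hβh0 : ∀ a, 0 ≤ βh a) (hβv0 : ∀ a, 0 ≤ βv a)
    (Bμh Bδ Br1 Bβh Bβv : ℝ)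
    (hμhB : ∀ a, μh a ≤ Bμh) (hδB : ∀ a, δ a ≤ Bδ) (hr1B : ∀ a, r1 a ≤ Br1)
    (hβhB : ∀ a, βh a ≤ Bβh) (hβvB : ∀ a, βv a ≤ Bβv)
    (sh0 : ℝ → ℝ) (hsh0 : ∀ a, sh0 a = Λh * exp (-(∫ u in (0:ℝ)..a, μh u)))
    (Sv0 : ℝ) (hSv0def : Sv0 = Λv / μv)
    (R0 : ℝ)
    (hR0 : R0 = Real.sqrt ((Sv0 / μv) * ∫ s in Ioi (0:ℝ), ∫ ξ in Ioi (0:ℝ),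
      βh (ξ+s) * βv ξ * sh0 ξ * exp (-(∫ u in ξ..(ξ+s), (μh u + r1 u + δ u)))))
    (g : ℂ → ℂ)
    (hg : ∀ lam : ℂ, g lam = ((Sv0 / μv : ℝ) : ℂ) * ∫ a in Ioi (0:ℝ), ((βh a : ℝ) : ℂ) *
      ∫ s in (0:ℝ)..a, ((βv s * sh0 s : ℝ) : ℂ) *
        Complex.exp (-(∫ z in s..a, (((μh z + δ z + r1 z : ℝ) : ℂ) + lam)))) :
    (∀ lam : ℂ, 0 ≤ lam.re → ‖g lam‖ ≤ R0 ^ 2) ∧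
    (R0 < 1 → ∀ lam : ℂ, 0 ≤ lam.re → g lam ≠ 1) := by
  set c : ℝ → ℝ := fun z => μh z + δ z + r1 z
  have hcm (z : ℝ) : μ0 ≤ c z :=
    le_add_of_le_of_nonneg (le_add_of_le_of_nonneg (hμh_lb z) (hδ0 z)) (hr10 z)
  have hc := intervalIntegrable_of_le_of_le ((hμhm.add hδm).add hr1m) hcm
    fun z => add_le_add (add_le_add (hμhB z) (hδB z)) (hr1B z)
  have hμh := intervalIntegrable_of_le_of_le hμhm hμh_lb hμhB
  have hsh0_nonneg (a : ℝ) : 0 ≤ sh0 a := by rw [hsh0]; positivity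
  have hw0 (s : ℝ) : 0 ≤ βv s * sh0 s := mul_nonneg (hβv0 s) (hsh0_nonneg s)
  have hw (ξ : ℝ) (hξ : 0 < ξ) : βv ξ * sh0 ξ ≤ Bβv * Λh * exp (-(μ0 * ξ)) := by
    have hsurv := survival.le_exp_neg_mul (hμh 0 ξ) hμh_lb hξ.le
    rw [sub_zero, survival] at hsurv
    rw [hsh0 ξ, mul_assoc]
    exact mul_le_mul (hβvB ξ) (by gcongr) (by positivity) ((hβv0 ξ).trans (hβvB ξ))
  have hsh0m : Measurable sh0 := by
    rw [funext hsh0]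
    exact measurable_const.mul (survival.measurable_right hμh 0)
  have hfin := lintegral_Ioi_lintegral_Ioi_survival_ne_top hμ0 hβhB hβh0 hw hw0 hc hcm
  have hK : 0 ≤ Sv0 / μv := by rw [hSv0def]; positivity
  have hR0sq : R0 ^ 2 = Sv0 / μv * ∫ t in Ioi 0, ∫ ξ in Ioi 0,
      βh (ξ + t) * (βv ξ * sh0 ξ) * survival c ξ (ξ + t) := by
    rw [hR0, sq_sqrt (mul_nonneg hK (integral_nonneg fun t => integral_nonneg fun ξ =>
      mul_nonneg (mul_nonneg (mul_nonneg (hβh0 _) (hβv0 ξ)) (hsh0_nonneg ξ)) (exp_pos _).le))]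
    simp only [survival, c, mul_assoc, add_right_comm _ (r1 _)]
  have hbound (lam : ℂ) (hlam : 0 ≤ lam.re) : ‖g lam‖ ≤ R0 ^ 2 := by
    rw [hg, norm_mul, Complex.norm_of_nonneg hK, hR0sq]
    exact mul_le_mul_of_nonneg_left (norm_integral_Ioi_integral_cexp_le hβhm hβh0
      (hβvm.mul hsh0m) hw0 hc hfin hlam) hK
  refine ⟨hbound, fun hR0_lt lam hlam hg1 => ?_⟩
  have h := hbound lam hlam
  rw [hg1, norm_one] at h
  exact h.not_gt (pow_lt_one₀ (hR0 ▸ sqrt_nonneg _) hR0_lt two_ne_zero)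

/-- The characteristic function of the linearization of the age-structured SIRS/SI
malaria model at the parasite-free equilibrium satisfies `|g(λ)| ≤ R₀²` on the closed
right half plane; in particular it has no root of `g(λ) = 1` there when `R₀ < 1`. -/
theorem characteristic_function_complex_bound
    (Λh Λv μv μ0 : ℝ)
    (μh δ r1 r2 βh βv : ℝ → ℝ)
    (hΛh : 0 < Λh) (hΛv : 0 < Λv) (hμv : 0 < μv) (hμ0 : 0 < μ0)
    (hμhm : Measurable μh) (hδm : Measurable δ) (hr1m : Measurable r1)
    (hr2m : Measurable r2) (hβhm : Measurable βh) (hβvm : Measurable βv)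
    (hμh_lb : ∀ a, μ0 ≤ μh a) (hμv_lb : μ0 ≤ μv)
    (hδ0 : ∀ a, 0 ≤ δ a) (hr10 : ∀ a, 0 ≤ r1 a) (hr20 : ∀ a, 0 ≤ r2 a)
    (hβh0 : ∀ a, 0 ≤ βh a) (hβv0 : ∀ a, 0 ≤ βv a)
    (Bμh Bδ Br1 Br2 Bβh Bβv : ℝ)
    (hμhB : ∀ a, μh a ≤ Bμh) (hδB : ∀ a, δ a ≤ Bδ) (hr1B : ∀ a, r1 a ≤ Br1)
    (hr2B : ∀ a, r2 a ≤ Br2) (hβhB : ∀ a, βh a ≤ Bβh) (hβvB : ∀ a, βv a ≤ Bβv)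
    (sh0 : ℝ → ℝ) (hsh0 : ∀ a, sh0 a = Λh * exp (-(∫ u in (0:ℝ)..a, μh u)))
    (Sv0 : ℝ) (hSv0def : Sv0 = Λv / μv)
    (R0 : ℝ)
    (hR0 : R0 = Real.sqrt ((Sv0 / μv) * ∫ s in Ioi (0:ℝ), ∫ ξ in Ioi (0:ℝ),
      βh (ξ+s) * βv ξ * sh0 ξ * exp (-(∫ u in ξ..(ξ+s), (μh u + r1 u + δ u)))))
    (g : ℂ → ℂ)
    (hg : ∀ lam : ℂ, g lam = ((Sv0 / μv : ℝ) : ℂ) * ∫ a in Ioi (0:ℝ), ((βh a : ℝ) : ℂ) *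
      ∫ s in (0:ℝ)..a, ((βv s * sh0 s : ℝ) : ℂ) *
        Complex.exp (-(∫ z in s..a, (((μh z + δ z + r1 z : ℝ) : ℂ) + lam)))) :
    (∀ lam : ℂ, 0 ≤ lam.re → ‖g lam‖ ≤ R0 ^ 2) ∧
    (R0 < 1 → ∀ lam : ℂ, 0 ≤ lam.re → g lam ≠ 1) :=
  characteristic_function_complex_bound_general Λh Λv μv μ0 μh δ r1 βh βv hΛh hΛv hμv hμ0 hμhm hδm
    hr1m hβhm hβvm hμh_lb hδ0 hr10 hβh0 hβv0 Bμh Bδ Br1 Bβh Bβv hμhB hδB hr1B hβhB hβvB sh0 hsh0 Sv0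
    hSv0def R0 hR0 g hg
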